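/- Fix m > 0 and e ≠ 0, let φ₀ be a Choquard ground state, and let U, V, F, G be Schwartz-class functions ℝ³ → ℂ². Then 𝔐(U, V) = (F, G) — i.e. 2mU + P̸V = F and P̸U − (1/(2m))V + Â⁰V + 2e²φ₀ N*(φ₀ Re V₁) e₁ = G — holds if and only if U = (1/(2m))(F − P̸V) and, writing V = V₁e₁ + V₂e₂ and G′ = (1/(2m))P̸F − G with components G′₁, G′₂: L₁(Re V₁) = Re G′₁, L₀(Im V₁) = Im G′₁, L₀(Re V₂) = Re G′₂, and L₀(Im V₂) = Im G′₂. In particular the system decouples into scalar equations for the real and imaginary parts of the two components of V. -/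

import Mathlib

/-!
Solving the first equation for `U` and substituting, `P̸U = (1/(2m))(P̸F + ΔV)`, because
`P̸² = −Δ`: mixed partials commute and the Pauli matrices satisfy `σⱼσₖ + σₖσⱼ = 2δⱼₖ`.
The second equation then reads `−(1/(2m))ΔV + (1/(2m))V − Â⁰V − 2e²φ₀ N*(φ₀ Re V₁) e₁ = G′`.
Its coefficients are real, the nonlocal term only enters the real part of the first component,
and `Δ` commutes with taking real and imaginary parts of components, so it splits into the four
scalar equations.
-/

open MeasureTheory Real

noncomputable section

/-- Partial derivative in the `j`-th coordinate direction on `ℝ³`. -/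
def pd {E : Type*} [NormedAddCommGroup E] [NormedSpace ℝ E]
    (j : Fin 3) (f : EuclideanSpace ℝ (Fin 3) → E)
    (x : EuclideanSpace ℝ (Fin 3)) : E :=
  fderiv ℝ f x (EuclideanSpace.single j 1)

/-- Laplacian on `ℝ³`, `Δf = Σⱼ ∂ⱼ∂ⱼ f`. -/
def lap {E : Type*} [NormedAddCommGroup E] [NormedSpace ℝ E]
    (f : EuclideanSpace ℝ (Fin 3) → E) (x : EuclideanSpace ℝ (Fin 3)) : E :=
  ∑ j : Fin 3, pd j (pd j f) x

/-- Convolution with the Newtonian potential `N(x) = 1/(4π|x|)` on `ℝ³`,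
for real-valued functions. -/
def Nconv (h : EuclideanSpace ℝ (Fin 3) → ℝ) (x : EuclideanSpace ℝ (Fin 3)) : ℝ :=
  ∫ y, h y / (4 * π * ‖x - y‖)

/-- A Choquard ground state: a strictly positive, spherically symmetric,
Schwartz-class function `φ₀ : ℝ³ → ℝ` with
`(1/(2m))φ₀ − (1/(2m))Δφ₀ − e²(N*φ₀²)φ₀ = 0`. -/
def IsChoquardGroundState (m e : ℝ) (φ₀ : EuclideanSpace ℝ (Fin 3) → ℝ) : Prop :=
  (∀ x, 0 < φ₀ x) ∧
  (∀ x y : EuclideanSpace ℝ (Fin 3), ‖x‖ = ‖y‖ → φ₀ x = φ₀ y) ∧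
  (∃ Φ : SchwartzMap (EuclideanSpace ℝ (Fin 3)) ℝ, ∀ x, Φ x = φ₀ x) ∧
  (∀ x, (1 / (2 * m)) * φ₀ x - (1 / (2 * m)) * lap φ₀ x
      - e ^ 2 * Nconv (fun y => (φ₀ y) ^ 2) x * φ₀ x = 0)

/-- The linearized operator `L₀v = −(1/(2m))Δv + (1/(2m))v − e²(N*φ₀²)v`. -/
def L0 (m e : ℝ) (φ₀ v : EuclideanSpace ℝ (Fin 3) → ℝ)
    (x : EuclideanSpace ℝ (Fin 3)) : ℝ :=
  -(1 / (2 * m)) * lap v x + (1 / (2 * m)) * v x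
    - e ^ 2 * Nconv (fun y => (φ₀ y) ^ 2) x * v x

/-- The linearized operator `L₁v = L₀v − 2e²(N*(φ₀v))φ₀`. -/
def L1 (m e : ℝ) (φ₀ v : EuclideanSpace ℝ (Fin 3) → ℝ)
    (x : EuclideanSpace ℝ (Fin 3)) : ℝ :=
  L0 m e φ₀ v x - 2 * e ^ 2 * Nconv (fun y => φ₀ y * v y) x * φ₀ x

/-- The Pauli matrices `σ₁, σ₂, σ₃`. -/
def pauli : Fin 3 → Matrix (Fin 2) (Fin 2) ℂ :=
  ![!![0, 1; 1, 0], !![0, -Complex.I; Complex.I, 0], !![1, 0; 0, -1]]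

/-- `σ·∇ = σ₁∂₁ + σ₂∂₂ + σ₃∂₃` acting on `f : ℝ³ → ℂ²`. -/
def sigmaDeriv (f : EuclideanSpace ℝ (Fin 3) → Fin 2 → ℂ)
    (x : EuclideanSpace ℝ (Fin 3)) : Fin 2 → ℂ :=
  ∑ j : Fin 3, (pauli j).mulVec (pd j f x)

/-- `P̸ = −i σ·∇`. -/
def Pslash (f : EuclideanSpace ℝ (Fin 3) → Fin 2 → ℂ)
    (x : EuclideanSpace ℝ (Fin 3)) : Fin 2 → ℂ :=
  (-Complex.I) • sigmaDeriv f x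

/-- The operator `𝔐` (derivative of the rescaled Dirac–Maxwell map at the
nonrelativistic limit point):
`𝔐(U,V) = (2mU + P̸V, P̸U − (1/(2m))V + Â⁰V + 2e² φ₀ N*(φ₀ Re V₁) e₁)`,
where `Â⁰ = e²N*φ₀²`, `V₁` is the first component of `V`, `e₁ = (1,0)`. -/
def Mop (m e : ℝ) (φ₀ : EuclideanSpace ℝ (Fin 3) → ℝ)
    (U V : EuclideanSpace ℝ (Fin 3) → Fin 2 → ℂ) :
    (EuclideanSpace ℝ (Fin 3) → Fin 2 → ℂ) ×
      (EuclideanSpace ℝ (Fin 3) → Fin 2 → ℂ) :=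
  (fun x => ((2 * m : ℝ) : ℂ) • U x + Pslash V x,
   fun x => Pslash U x - ((1 / (2 * m) : ℝ) : ℂ) • V x
     + ((e ^ 2 * Nconv (fun y => (φ₀ y) ^ 2) x : ℝ) : ℂ) • V x
     + ((2 * e ^ 2 * Nconv (fun y => φ₀ y * (V y 0).re) x * φ₀ x : ℝ) : ℂ) •
         (![1, 0] : Fin 2 → ℂ))

open scoped ContDiff

local notation "ℝ³" => EuclideanSpace ℝ (Fin 3)

section PartialDerivative

variable {E F : Type*} [NormedAddCommGroup E] [NormedSpace ℝ E]
  [NormedAddCommGroup F] [NormedSpace ℝ F] {f g : ℝ³ → E} {x : ℝ³}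

lemma pd_clm_comp (L : E →L[ℝ] F) (hf : DifferentiableAt ℝ f x) (j : Fin 3) :
    pd j (fun y => L (f y)) x = L (pd j f x) := by
  have hL : HasFDerivAt (fun y => L (f y)) (L.comp (fderiv ℝ f x)) x :=
    L.hasFDerivAt.comp x hf.hasFDerivAt
  rw [pd, hL.fderiv]
  rfl

lemma pd_sub (hf : DifferentiableAt ℝ f x) (hg : DifferentiableAt ℝ g x) (j : Fin 3) :
    pd j (fun y => f y - g y) x = pd j f x - pd j g x := by
  rw [pd, fderiv_fun_sub hf hg]
  rfl

lemma pd_const_smul {R : Type*} [Semiring R] [Module R E] [SMulCommClass ℝ R E]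
    [ContinuousConstSMul R E] (hf : DifferentiableAt ℝ f x) (c : R) (j : Fin 3) :
    pd j (fun y => c • f y) x = c • pd j f x := by
  rw [pd, fderiv_fun_const_smul hf c]
  rfl

lemma pd_sum {ι : Type*} {s : Finset ι} {f : ι → ℝ³ → E}
    (hf : ∀ i ∈ s, DifferentiableAt ℝ (f i) x) (j : Fin 3) :
    pd j (fun y => ∑ i ∈ s, f i y) x = ∑ i ∈ s, pd j (f i) x := by
  rw [pd, fderiv_fun_sum hf, _root_.sum_apply]
  rfl

lemma ContDiff.pd {n : WithTop ℕ∞} (hf : ContDiff ℝ (n + 1) f) (j : Fin 3) :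
    ContDiff ℝ n (pd j f) :=
  (hf.fderiv_right le_rfl).clm_apply contDiff_const

lemma pd_pd_comm (hf : ContDiff ℝ 2 f) (i j : Fin 3) (x : ℝ³) :
    pd i (pd j f) x = pd j (pd i f) x := by
  have hdf : DifferentiableAt ℝ (fderiv ℝ f) x :=
    (hf.fderiv_right (m := 1) le_rfl).differentiable one_ne_zero x
  have hsnd : ∀ k l : Fin 3, pd k (pd l f) x =
      fderiv ℝ (fderiv ℝ f) x (EuclideanSpace.single k 1) (EuclideanSpace.single l 1) := by
    intro k l
    exact pd_clm_comp (ContinuousLinearMap.apply ℝ E (EuclideanSpace.single l 1)) hdf k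
  rw [hsnd, hsnd]
  exact hf.contDiffAt.isSymmSndFDerivAt (by simp) _ _

lemma lap_clm_comp (L : E →L[ℝ] F) (hf : ContDiff ℝ 2 f) (x : ℝ³) :
    lap (fun y => L (f y)) x = L (lap f x) := by
  have hf' : ContDiff ℝ (1 + 1) f := hf
  simp only [lap, map_sum]
  refine Finset.sum_congr rfl fun j _ => ?_
  have hL : pd j (fun y => L (f y)) = fun y => L (pd j f y) :=
    funext fun y => pd_clm_comp L (hf.differentiable two_ne_zero y) j
  rw [hL, pd_clm_comp L ((hf'.pd j).differentiable one_ne_zero x)]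

end PartialDerivative

open Matrix

lemma sum_sum_mul_mulVec_of_anticomm {ι n R : Type*} [Fintype ι] [DecidableEq ι] [Fintype n]
    [DecidableEq n] [Field R] [NeZero (2 : R)] {σ : ι → Matrix n n R}
    (hσ : ∀ i j, σ i * σ j + σ j * σ i = if i = j then 2 else 0)
    {v : ι → ι → n → R} (hv : ∀ i j, v i j = v j i) :
    ∑ i, ∑ j, (σ i * σ j) *ᵥ v i j = ∑ i, v i i := by
  have hswap : ∑ i, ∑ j, (σ i * σ j) *ᵥ v i j = ∑ i, ∑ j, (σ j * σ i) *ᵥ v i j := by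
    rw [Finset.sum_comm]
    exact Finset.sum_congr rfl fun i _ => Finset.sum_congr rfl fun j _ => by rw [hv]
  refine smul_right_injective _ (two_ne_zero (α := R)) ?_
  calc (2 : R) • ∑ i, ∑ j, (σ i * σ j) *ᵥ v i j
      = ∑ i, ∑ j, (σ i * σ j + σ j * σ i) *ᵥ v i j := by
        rw [two_smul]
        nth_rewrite 2 [hswap]
        simp only [add_mulVec, Finset.sum_add_distrib]
    _ = (2 : R) • ∑ i, v i i := by
        simp only [hσ, Finset.smul_sum]
        refine Finset.sum_congr rfl fun i _ => ?_
        rw [Finset.sum_eq_single i (fun j _ hji => by simp [Ne.symm hji]) (by simp)]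
        simp

lemma pauli_anticomm (i j : Fin 3) :
    pauli i * pauli j + pauli j * pauli i = if i = j then 2 else 0 := by
  fin_cases i <;> fin_cases j <;> ext a b <;> fin_cases a <;> fin_cases b <;>
    simp [pauli, ofNat_apply] <;> ring_nf

def Matrix.mulVecCLM {n : Type*} [Fintype n] (A : Matrix n n ℂ) :
    (n → ℂ) →L[ℝ] (n → ℂ) :=
  LinearMap.toContinuousLinearMap ((mulVecLin A).restrictScalars ℝ)

section Dirac

variable {f g : ℝ³ → Fin 2 → ℂ} {x : ℝ³}

lemma sigmaDeriv_eq_sum_mulVecCLM (f : ℝ³ → Fin 2 → ℂ) :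
    sigmaDeriv f = fun x => ∑ j : Fin 3, (pauli j).mulVecCLM (pd j f x) :=
  rfl

lemma ContDiff.sigmaDeriv {n : WithTop ℕ∞} (hf : ContDiff ℝ (n + 1) f) :
    ContDiff ℝ n (sigmaDeriv f) := by
  rw [sigmaDeriv_eq_sum_mulVecCLM]
  exact ContDiff.sum fun j _ => (pauli j).mulVecCLM.contDiff.comp (hf.pd j)

lemma pd_sigmaDeriv (hf : ContDiff ℝ 2 f) (k : Fin 3) (x : ℝ³) :
    pd k (sigmaDeriv f) x = ∑ j : Fin 3, pauli j *ᵥ pd k (pd j f) x := by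
  have hf' : ContDiff ℝ (1 + 1) f := hf
  have hpd : ∀ j, DifferentiableAt ℝ (pd j f) x :=
    fun j => (hf'.pd j).differentiable one_ne_zero x
  have hterm : ∀ j ∈ Finset.univ,
      DifferentiableAt ℝ (fun y => (pauli j).mulVecCLM (pd j f y)) x :=
    fun j _ => (pauli j).mulVecCLM.differentiableAt.comp x (hpd j)
  rw [sigmaDeriv_eq_sum_mulVecCLM, pd_sum hterm]
  exact Finset.sum_congr rfl fun j _ => pd_clm_comp _ (hpd j) k

lemma sigmaDeriv_sigmaDeriv (hf : ContDiff ℝ 2 f) (x : ℝ³) :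
    sigmaDeriv (sigmaDeriv f) x = lap f x := by
  calc sigmaDeriv (sigmaDeriv f) x
      = ∑ k : Fin 3, ∑ j : Fin 3, (pauli k * pauli j) *ᵥ pd k (pd j f) x := by
        simp only [sigmaDeriv, pd_sigmaDeriv hf, mulVec_sum, mulVec_mulVec]
    _ = lap f x :=
        sum_sum_mul_mulVec_of_anticomm pauli_anticomm fun k j => pd_pd_comm hf k j x

lemma sigmaDeriv_const_smul (hf : DifferentiableAt ℝ f x) (c : ℂ) :
    sigmaDeriv (fun y => c • f y) x = c • sigmaDeriv f x := by
  simp only [sigmaDeriv, pd_const_smul hf, mulVec_smul, Finset.smul_sum]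

lemma sigmaDeriv_sub (hf : DifferentiableAt ℝ f x) (hg : DifferentiableAt ℝ g x) :
    sigmaDeriv (fun y => f y - g y) x = sigmaDeriv f x - sigmaDeriv g x := by
  simp only [sigmaDeriv, pd_sub hf hg, mulVec_sub, Finset.sum_sub_distrib]

lemma ContDiff.Pslash {n : WithTop ℕ∞} (hf : ContDiff ℝ (n + 1) f) :
    ContDiff ℝ n (Pslash f) :=
  hf.sigmaDeriv.const_smul (-Complex.I)

lemma Pslash_const_smul (hf : DifferentiableAt ℝ f x) (c : ℂ) :
    Pslash (fun y => c • f y) x = c • Pslash f x := by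
  rw [Pslash, Pslash, sigmaDeriv_const_smul hf, smul_comm]

lemma Pslash_sub (hf : DifferentiableAt ℝ f x) (hg : DifferentiableAt ℝ g x) :
    Pslash (fun y => f y - g y) x = Pslash f x - Pslash g x := by
  rw [Pslash, Pslash, Pslash, sigmaDeriv_sub hf hg, smul_sub]

lemma Pslash_Pslash (hf : ContDiff ℝ 2 f) (x : ℝ³) : Pslash (Pslash f) x = -lap f x := by
  have hf' : ContDiff ℝ (1 + 1) f := hf
  have hσ : DifferentiableAt ℝ (sigmaDeriv f) x := hf'.sigmaDeriv.differentiable one_ne_zero x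
  change -Complex.I • sigmaDeriv (fun y => -Complex.I • sigmaDeriv f y) x = _
  rw [sigmaDeriv_const_smul hσ, sigmaDeriv_sigmaDeriv hf, smul_smul]
  simp

lemma lap_re_apply (hf : ContDiff ℝ 2 f) (i : Fin 2) (x : ℝ³) :
    lap (fun y => (f y i).re) x = (lap f x i).re :=
  lap_clm_comp
    (Complex.reCLM.comp (ContinuousLinearMap.proj (R := ℝ) (φ := fun _ : Fin 2 => ℂ) i)) hf x

lemma lap_im_apply (hf : ContDiff ℝ 2 f) (i : Fin 2) (x : ℝ³) :
    lap (fun y => (f y i).im) x = (lap f x i).im :=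
  lap_clm_comp
    (Complex.imCLM.comp (ContinuousLinearMap.proj (R := ℝ) (φ := fun _ : Fin 2 => ℂ) i)) hf x

end Dirac

section Mop

variable {m e : ℝ} {φ₀ : ℝ³ → ℝ} {U V F G G' : ℝ³ → Fin 2 → ℂ}

lemma Mop_fst_eq_iff (hm : m ≠ 0) :
    (∀ x, (Mop m e φ₀ U V).1 x = F x) ↔
      ∀ x, U x = ((1 / (2 * m) : ℝ) : ℂ) • (F x - Pslash V x) := by
  have h2m : ((2 * m : ℝ) : ℂ) ≠ 0 := by exact_mod_cast mul_ne_zero two_ne_zero hm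
  refine forall_congr' fun x => ?_
  simp only [Mop]
  rw [← eq_sub_iff_add_eq, ← eq_inv_smul_iff₀ h2m, one_div, Complex.ofReal_inv]

lemma Pslash_eq_of_eq_smul_sub (hF : ContDiff ℝ 1 F) (hV : ContDiff ℝ 2 V) (c : ℂ)
    (hU : ∀ x, U x = c • (F x - Pslash V x)) (x : ℝ³) :
    Pslash U x = c • (Pslash F x + lap V x) := by
  have hV' : ContDiff ℝ (1 + 1) V := hV
  have hF' := hF.differentiable one_ne_zero x
  have hPV := hV'.Pslash.differentiable one_ne_zero x
  rw [funext hU, Pslash_const_smul (f := fun y => F y - Pslash V y) (hF'.sub hPV),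
    Pslash_sub hF' hPV, Pslash_Pslash hV, sub_neg_eq_add]

lemma Mop_snd_apply_eq_iff (hV : ContDiff ℝ 2 V) (x : ℝ³)
    (hPU : Pslash U x = ((1 / (2 * m) : ℝ) : ℂ) • (Pslash F x + lap V x))
    (hG' : G' x = ((1 / (2 * m) : ℝ) : ℂ) • Pslash F x - G x) :
    (Mop m e φ₀ U V).2 x = G x ↔
      L1 m e φ₀ (fun y => (V y 0).re) x = (G' x 0).re ∧
      L0 m e φ₀ (fun y => (V y 0).im) x = (G' x 0).im ∧
      L0 m e φ₀ (fun y => (V y 1).re) x = (G' x 1).re ∧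
      L0 m e φ₀ (fun y => (V y 1).im) x = (G' x 1).im := by
  simp only [Mop, L1, L0, hPU, hG', funext_iff, Fin.forall_fin_two, lap_re_apply hV,
    lap_im_apply hV, Complex.ext_iff, Pi.add_apply, Pi.sub_apply, Pi.smul_apply,
    smul_eq_mul, Complex.add_re, Complex.add_im, Complex.sub_re, Complex.sub_im,
    Complex.re_ofReal_mul, Complex.im_ofReal_mul, Matrix.cons_val_zero, Matrix.cons_val_one,
    Complex.one_re, Complex.one_im, Complex.zero_re, Complex.zero_im, mul_one, mul_zero]
  constructor
  · rintro ⟨⟨h₁, h₂⟩, h₃, h₄⟩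
    exact ⟨by linarith, by linarith, by linarith, by linarith⟩
  · rintro ⟨h₁, h₂, h₃, h₄⟩
    exact ⟨⟨by linarith, by linarith⟩, by linarith, by linarith⟩

end Mop

theorem Mop_equation_decouples_general
    (m e : ℝ) (hm : 0 < m)
    (φ₀ : EuclideanSpace ℝ (Fin 3) → ℝ)
    (U V F G : SchwartzMap (EuclideanSpace ℝ (Fin 3)) (Fin 2 → ℂ))
    (G' : EuclideanSpace ℝ (Fin 3) → Fin 2 → ℂ)
    (hG' : ∀ x, G' x = ((1 / (2 * m) : ℝ) : ℂ) • Pslash (⇑F) x - G x) :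
    ((∀ x, (Mop m e φ₀ (⇑U) (⇑V)).1 x = F x) ∧
     (∀ x, (Mop m e φ₀ (⇑U) (⇑V)).2 x = G x))
    ↔
    ((∀ x, U x = ((1 / (2 * m) : ℝ) : ℂ) • (F x - Pslash (⇑V) x)) ∧
     (∀ x, L1 m e φ₀ (fun y => (V y 0).re) x = (G' x 0).re) ∧
     (∀ x, L0 m e φ₀ (fun y => (V y 0).im) x = (G' x 0).im) ∧
     (∀ x, L0 m e φ₀ (fun y => (V y 1).re) x = (G' x 1).re) ∧
     (∀ x, L0 m e φ₀ (fun y => (V y 1).im) x = (G' x 1).im)) := by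
  rw [Mop_fst_eq_iff hm.ne']
  refine and_congr_right fun hU => ?_
  have hPU := Pslash_eq_of_eq_smul_sub (F.smooth 1) (V.smooth 2) _ hU
  simp only [Mop_snd_apply_eq_iff (V.smooth 2) _ (hPU _) (hG' _), forall_and]

/-- solving `𝔐(U,V) = (F,G)` for Schwartz data is equivalent
to `U = (1/(2m))(F − P̸V)` together with the decoupled scalar equations
`L₁(Re V₁) = Re G′₁`, `L₀(Im V₁) = Im G′₁`, `L₀(Re V₂) = Re G′₂`,
`L₀(Im V₂) = Im G′₂`, where `G′ = (1/(2m))P̸F − G`. -/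
theorem Mop_equation_decouples
    (m e : ℝ) (hm : 0 < m) (he : e ≠ 0)
    (φ₀ : EuclideanSpace ℝ (Fin 3) → ℝ)
    (hφ₀ : IsChoquardGroundState m e φ₀)
    (U V F G : SchwartzMap (EuclideanSpace ℝ (Fin 3)) (Fin 2 → ℂ))
    (G' : EuclideanSpace ℝ (Fin 3) → Fin 2 → ℂ)
    (hG' : ∀ x, G' x = ((1 / (2 * m) : ℝ) : ℂ) • Pslash (⇑F) x - G x) :
    ((∀ x, (Mop m e φ₀ (⇑U) (⇑V)).1 x = F x) ∧
     (∀ x, (Mop m e φ₀ (⇑U) (⇑V)).2 x = G x))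
    ↔
    ((∀ x, U x = ((1 / (2 * m) : ℝ) : ℂ) • (F x - Pslash (⇑V) x)) ∧
     (∀ x, L1 m e φ₀ (fun y => (V y 0).re) x = (G' x 0).re) ∧
     (∀ x, L0 m e φ₀ (fun y => (V y 0).im) x = (G' x 0).im) ∧
     (∀ x, L0 m e φ₀ (fun y => (V y 1).re) x = (G' x 1).re) ∧
     (∀ x, L0 m e φ₀ (fun y => (V y 1).im) x = (G' x 1).im)) :=
  Mop_equation_decouples_general m e hm φ₀ U V F G G' hG'
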